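/- arXiv:0802.0119 — 9 statements merged into one kernel-verified Lean document; each statement's English description precedes it below -/
import Mathlib

section
/- Let G be a continuum (compact connected set) in the one-point compactification of ℝ^N containing the point at infinity, and let H be a connected component of the intersection of G with ℝ^N. Then H is unbounded. -/
open OnePoint Bornology Set Metric

/-- In a compact Hausdorff space, if the connected component of `x` is contained in an open
set `U`, then there is a clopen set between them. -/
lemma exists_isClopen_subset_of_connectedComponent_subset {α : Type*} [TopologicalSpace α]
    [T2Space α] [CompactSpace α] {x : α} {U : Set α}
    (hU : IsOpen U) (h : connectedComponent x ⊆ U) :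
    ∃ Z : Set α, IsClopen Z ∧ x ∈ Z ∧ Z ⊆ U := by
  rw [connectedComponent_eq_iInter_isClopen] at h
  have H1 := hU.isClosed_compl.isCompact.inter_iInter_nonempty
    (fun s : { s : Set α // IsClopen s ∧ x ∈ s } => (s : Set α)) fun s => s.2.1.1
  rw [← not_disjoint_iff_nonempty_inter, imp_not_comm, not_forall] at H1
  cases' H1 (disjoint_compl_left_iff_subset.2 h) with si H2
  refine ⟨⋂ U ∈ si, Subtype.val U, isClopen_biInter_finset fun s _ => s.2.1,
    mem_iInter₂.2 fun s _ => s.2.2, ?_⟩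
  rwa [← disjoint_compl_left_iff_subset, disjoint_iff_inter_eq_empty,
    ← not_nonempty_iff_eq_empty]

/-- A connected component of the finite part of a continuum
containing `∞` in the one-point compactification of `ℝ^N` is unbounded. -/
theorem component_of_continuum_through_infty_unbounded
    {N : ℕ} (hN : 1 ≤ N)
    (G : Set (OnePoint (EuclideanSpace ℝ (Fin N))))
    (hGne : G.Nonempty) (hGcomp : IsCompact G) (hGconn : IsConnected G)
    (hGinf : ∞ ∈ G)
    (x : EuclideanSpace ℝ (Fin N))
    (hx : (x : OnePoint (EuclideanSpace ℝ (Fin N))) ∈ G) :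
    ¬ IsBounded (connectedComponentIn
      {y : EuclideanSpace ℝ (Fin N) | (y : OnePoint (EuclideanSpace ℝ (Fin N))) ∈ G} x) := by
  haveI : T4Space (OnePoint (EuclideanSpace ℝ (Fin N))) := {}
  intro hbd
  set S : Set (EuclideanSpace ℝ (Fin N)) := {y : EuclideanSpace ℝ (Fin N) | (y : OnePoint (EuclideanSpace ℝ (Fin N))) ∈ G} with hSdef
  have hxS : x ∈ S := hx
  have hSclosed : IsClosed S := hGcomp.isClosed.preimage OnePoint.continuous_coe
  set H := connectedComponentIn S x with hHdef
  have hxH : x ∈ H := mem_connectedComponentIn hxS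
  have hHsub : H ⊆ S := connectedComponentIn_subset S x
  have hclos : closure H ⊆ H :=
    IsPreconnected.subset_connectedComponentIn isPreconnected_connectedComponentIn.closure
      (subset_closure hxH) (hSclosed.closure_subset_iff.2 hHsub)
  have hHclosed : IsClosed H := isClosed_of_closure_subset hclos
  obtain ⟨R, hR⟩ := hbd.subset_ball 0
  set A : Set (EuclideanSpace ℝ (Fin N)) := S ∩ closedBall 0 R with hAdef
  have hAcomp : IsCompact A := (isCompact_closedBall (0 : EuclideanSpace ℝ (Fin N)) R).inter_left hSclosed
  have hxA : x ∈ A := ⟨hxS, ball_subset_closedBall (hR hxH)⟩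
  haveI : CompactSpace A := isCompact_iff_compactSpace.mp hAcomp
  set x' : A := ⟨x, hxA⟩ with hx'def
  -- the connected component of `x` in the subtype `A` maps into `ball 0 R`
  have hcompH : (Subtype.val '' connectedComponent x') ⊆ H := by
    apply IsPreconnected.subset_connectedComponentIn
    · exact isPreconnected_connectedComponent.image _ continuous_subtype_val.continuousOn
    · exact ⟨x', mem_connectedComponent, rfl⟩
    · rintro y ⟨z, _, rfl⟩; exact z.2.1
  have hsubU : connectedComponent x' ⊆ Subtype.val ⁻¹' ball (0 : EuclideanSpace ℝ (Fin N)) R :=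
    fun z hz => hR (hcompH ⟨z, hz, rfl⟩)
  obtain ⟨Z, hZclopen, hxZ, hZsub⟩ :=
    exists_isClopen_subset_of_connectedComponent_subset
      (isOpen_ball.preimage continuous_subtype_val) hsubU
  set V : Set (EuclideanSpace ℝ (Fin N)) := Subtype.val '' Z with hVdef
  have hVball : V ⊆ ball (0 : EuclideanSpace ℝ (Fin N)) R := by rintro y ⟨z, hz, rfl⟩; exact hZsub hz
  have hVcomp : IsCompact V := (hZclopen.isClosed.isCompact).image continuous_subtype_val
  have hxV : x ∈ V := ⟨x', hxZ, rfl⟩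
  obtain ⟨O₁, hO₁open, hZeq⟩ := isOpen_induced_iff.mp hZclopen.isOpen
  set O : Set (EuclideanSpace ℝ (Fin N)) := O₁ ∩ ball 0 R with hOdef
  have hOopen : IsOpen O := hO₁open.inter isOpen_ball
  have hVeq : V = S ∩ O := by
    ext y
    constructor
    · rintro ⟨z, hz, rfl⟩
      have hzO₁ : (z : EuclideanSpace ℝ (Fin N)) ∈ O₁ := by rw [← hZeq] at hz; exact hz
      exact ⟨z.2.1, hzO₁, hZsub hz⟩
    · rintro ⟨hyS, hyO₁, hyb⟩
      have hyA : y ∈ A := ⟨hyS, ball_subset_closedBall hyb⟩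
      refine ⟨⟨y, hyA⟩, ?_, rfl⟩
      rw [← hZeq]; exact hyO₁
  -- now derive a contradiction with connectedness of G
  set u : Set (OnePoint (EuclideanSpace ℝ (Fin N))) := (↑) '' O with hudef
  have hu : IsOpen u := OnePoint.isOpenEmbedding_coe.isOpenMap O hOopen
  set cv : Set (OnePoint (EuclideanSpace ℝ (Fin N))) := (↑) '' V with hcvdef
  have hcvcl : IsClosed cv := (hVcomp.image OnePoint.continuous_coe).isClosed
  have key : G ∩ u ⊆ cv := by
    rintro z ⟨hzG, y, hyO, rfl⟩
    exact ⟨y, hVeq ▸ ⟨hzG, hyO⟩, rfl⟩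
  have hcover : G ⊆ u ∪ cvᶜ := by
    intro z hz
    by_cases hzcv : z ∈ cv
    · obtain ⟨y, hyV, rfl⟩ := hzcv
      exact Or.inl ⟨y, (hVeq ▸ hyV).2, rfl⟩
    · exact Or.inr hzcv
  have hne1 : (G ∩ u).Nonempty := ⟨(x : OnePoint (EuclideanSpace ℝ (Fin N))), hx, x, (hVeq ▸ hxV).2, rfl⟩
  have hne2 : (G ∩ cvᶜ).Nonempty := by
    refine ⟨∞, hGinf, ?_⟩
    rintro ⟨y, _, hy⟩
    exact OnePoint.coe_ne_infty y hy
  obtain ⟨z, hzG, hzu, hzcv⟩ :=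
    hGconn.isPreconnected u cvᶜ hu hcvcl.isOpen_compl hcover hne1 hne2
  exact hzcv (key ⟨hzG, hzu⟩)
end

section
/- Let E be a continuum in the one-point compactification of ℝ^N containing ∞, and let g : ℝ^N → ℝ^N be a continuous open map. Then no connected component of the preimage g⁻¹(E ∩ ℝ^N) = {x ∈ ℝ^N : g(x) ∈ E} is bounded (provided the preimage is nonempty). -/
open OnePoint Bornology

/-- In a compact Hausdorff space, a connected component contained in an open set
is contained in a clopen set contained in that open set. -/
theorem aux_clopen_of_connectedComponent_subset {X : Type*} [TopologicalSpace X]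
    [CompactSpace X] [T2Space X] (x : X) {U : Set X} (hU : IsOpen U)
    (h : connectedComponent x ⊆ U) :
    ∃ Z : Set X, IsClopen Z ∧ connectedComponent x ⊆ Z ∧ Z ⊆ U := by
  let N := { s : Set X // IsClopen s ∧ x ∈ s }
  haveI : Nonempty N := ⟨⟨Set.univ, isClopen_univ, Set.mem_univ x⟩⟩
  have hNcl : ∀ s : N, IsClosed s.val := fun s => s.property.1.1
  have hdir : Directed (· ⊇ ·) fun s : N => s.val := by
    rintro ⟨s, hs, hxs⟩ ⟨t, ht, hxt⟩
    exact ⟨⟨s ∩ t, hs.inter ht, ⟨hxs, hxt⟩⟩, Set.inter_subset_left, Set.inter_subset_right⟩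
  have hint : (⋂ s : N, s.val) = connectedComponent x :=
    (connectedComponent_eq_iInter_isClopen x).symm
  have h_nhd : ∀ y ∈ ⋂ s : N, s.val, U ∈ nhds y := fun y hy => by
    rw [hint] at hy
    exact hU.mem_nhds (h hy)
  obtain ⟨s, hs⟩ := exists_subset_nhds_of_compactSpace hdir hNcl h_nhd
  refine ⟨s.val, s.property.1, ?_, hs⟩
  rw [connectedComponent_eq_iInter_isClopen x]
  exact Set.iInter_subset _ s

/-- If `E` is a continuum in the one-point compactification of `ℝ^N`
containing `∞` and `g : ℝ^N → ℝ^N` is continuous and open, then no connected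
component of `{x : g x ∈ E}` is bounded. -/
theorem no_bounded_component_of_preimage_of_continuum
    {N : ℕ} (hN : 1 ≤ N)
    (E : Set (OnePoint (EuclideanSpace ℝ (Fin N))))
    (hEne : E.Nonempty) (hEcomp : IsCompact E) (hEconn : IsConnected E)
    (hEinf : ∞ ∈ E)
    (g : EuclideanSpace ℝ (Fin N) → EuclideanSpace ℝ (Fin N))
    (hgc : Continuous g)
    (hgo : ∀ U : Set (EuclideanSpace ℝ (Fin N)), IsOpen U → IsOpen (g '' U))
    (hne : {x : EuclideanSpace ℝ (Fin N) |
      (g x : OnePoint (EuclideanSpace ℝ (Fin N))) ∈ E}.Nonempty)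
    (x : EuclideanSpace ℝ (Fin N))
    (hx : (g x : OnePoint (EuclideanSpace ℝ (Fin N))) ∈ E) :
    ¬ IsBounded (connectedComponentIn
      {y : EuclideanSpace ℝ (Fin N) |
        (g y : OnePoint (EuclideanSpace ℝ (Fin N))) ∈ E} x) := by
  intro hb
  haveI : R1Space (OnePoint (EuclideanSpace ℝ (Fin N))) := inferInstance
  haveI : T2Space (OnePoint (EuclideanSpace ℝ (Fin N))) := inferInstance
  set F : Set (EuclideanSpace ℝ (Fin N)) := {y : EuclideanSpace ℝ (Fin N) | (g y : OnePoint (EuclideanSpace ℝ (Fin N))) ∈ E} with hFdef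
  have hFclosed : IsClosed F :=
    hEcomp.isClosed.preimage (OnePoint.continuous_coe.comp hgc)
  set C := connectedComponentIn F x with hCdef
  have hxF : x ∈ F := hx
  have hxC : x ∈ C := mem_connectedComponentIn hxF
  -- a ball containing C
  obtain ⟨r, hr⟩ := hb.subset_closedBall 0
  set R : ℝ := r + 1 with hRdef
  have hCR : C ⊆ Metric.ball 0 R :=
    hr.trans (Metric.closedBall_subset_ball (by linarith))
  -- the compact set K
  set K : Set (EuclideanSpace ℝ (Fin N)) := F ∩ Metric.closedBall 0 R with hKdef
  have hKF : K ⊆ F := Set.inter_subset_left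
  have hKcomp : IsCompact K :=
    Metric.isCompact_of_isClosed_isBounded (hFclosed.inter Metric.isClosed_closedBall)
      (Metric.isBounded_closedBall.subset Set.inter_subset_right)
  have hxK : x ∈ K := ⟨hxF, Metric.ball_subset_closedBall (hCR hxC)⟩
  haveI : CompactSpace K := isCompact_iff_compactSpace.mp hKcomp
  -- the component of x in K, inside the subtype
  set x' : K := ⟨x, hxK⟩ with hx'def
  have himg : Subtype.val '' connectedComponent x' ⊆ Metric.ball 0 R := by
    rw [← connectedComponentIn_eq_image hxK]
    exact (connectedComponentIn_mono x hKF).trans hCR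
  have hZsub : connectedComponent x' ⊆ Subtype.val ⁻¹' Metric.ball 0 R :=
    Set.image_subset_iff.mp himg
  obtain ⟨Z, hZclopen, hZcc, hZU⟩ := aux_clopen_of_connectedComponent_subset x'
    (Metric.isOpen_ball.preimage continuous_subtype_val) hZsub
  -- the set V
  set V : Set (EuclideanSpace ℝ (Fin N)) := Subtype.val '' Z with hVdef
  have hxV : x ∈ V := ⟨x', hZcc mem_connectedComponent, rfl⟩
  have hVcomp : IsCompact V :=
    (hZclopen.1.isCompact).image continuous_subtype_val
  have hVball : V ⊆ Metric.ball 0 R := Set.image_subset_iff.mpr hZU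
  obtain ⟨W, hWopen, hZW⟩ := isOpen_induced_iff.mp hZclopen.2
  have hVKW : V = K ∩ W := by
    rw [hVdef, ← hZW, Subtype.image_preimage_coe]
  -- the open set W'
  set W' : Set (EuclideanSpace ℝ (Fin N)) := W ∩ Metric.ball 0 R with hW'def
  have hW'open : IsOpen W' := hWopen.inter Metric.isOpen_ball
  have hFW' : F ∩ W' = V := by
    apply Set.Subset.antisymm
    · rintro y ⟨hyF, hyW, hyb⟩
      rw [hVKW]
      exact ⟨⟨hyF, Metric.ball_subset_closedBall hyb⟩, hyW⟩
    · intro y hy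
      have h1 := hVKW ▸ hy
      exact ⟨h1.1.1, h1.2, hVball hy⟩
  have hVW' : V ⊆ W' := by
    intro y hy
    exact ⟨(hVKW ▸ hy).2, hVball hy⟩
  -- a compact neighborhood
  obtain ⟨L, hLcomp, hVL, hLW'⟩ := exists_compact_between hVcomp hW'open hVW'
  set U : Set (EuclideanSpace ℝ (Fin N)) := interior L with hUdef
  have hxU : x ∈ U := hVL hxV
  have hclU : closure U ⊆ L := closure_minimal interior_subset hLcomp.isClosed
  have hclUcomp : IsCompact (closure U) :=
    hLcomp.of_isClosed_subset isClosed_closure hclU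
  have hFclU : ∀ y : (EuclideanSpace ℝ (Fin N)), y ∈ F → y ∈ closure U → y ∈ U := by
    intro y hyF hyc
    apply hVL
    rw [← hFW']
    exact ⟨hyF, hLW' (hclU hyc)⟩
  -- the two open sets in the one-point compactification
  set ι : EuclideanSpace ℝ (Fin N) → OnePoint (EuclideanSpace ℝ (Fin N)) := (↑) with hιdef
  set A₁ : Set (OnePoint (EuclideanSpace ℝ (Fin N))) := ι '' (g '' U) with hA₁def
  set A₂ : Set (OnePoint (EuclideanSpace ℝ (Fin N))) := (ι '' (g '' closure U))ᶜ with hA₂def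
  have hA₁open : IsOpen A₁ :=
    OnePoint.isOpenEmbedding_coe.isOpenMap _ (hgo U isOpen_interior)
  have hA₂open : IsOpen A₂ :=
    (((hclUcomp.image hgc).image OnePoint.continuous_coe).isClosed).isOpen_compl
  have hcover : E ⊆ A₁ ∪ A₂ := by
    intro e he
    by_cases hcase : e ∈ ι '' (g '' closure U)
    · left
      obtain ⟨z, ⟨y, hyU, rfl⟩, rfl⟩ := hcase
      have hyF : y ∈ F := he
      exact ⟨g y, ⟨y, hFclU y hyF hyU, rfl⟩, rfl⟩
    · right; exact hcase
  have hdisj : A₁ ∩ A₂ = ∅ := by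
    apply Set.eq_empty_iff_forall_notMem.mpr
    rintro e ⟨he1, he2⟩
    exact he2 (Set.image_mono (Set.image_mono subset_closure) he1)
  have hE1 : (E ∩ A₁).Nonempty := ⟨ι (g x), hx, ⟨g x, ⟨x, hxU, rfl⟩, rfl⟩⟩
  have hE2 : (E ∩ A₂).Nonempty := by
    refine ⟨∞, hEinf, ?_⟩
    rintro ⟨z, -, hz⟩
    exact OnePoint.coe_ne_infty z hz
  obtain ⟨e, -, heA⟩ := hEconn.isPreconnected A₁ A₂ hA₁open hA₂open hcover hE1 hE2
  rw [hdisj] at heA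
  exact heA
end

section
/- Let E be a continuum in ℝ^N ∪ {∞} with ∞ ∈ E, let g : ℝ^N → ℝ^N be a continuous open map with g⁻¹(E) nonempty, and let H₁ be a compact subset of ℝ^N. If g(W \ H₁) ∩ E = ∅ for an open set W with H₁ ⊆ W, then the set E \ g(H₁) is closed in ℝ^N ∪ {∞}. -/
open OnePoint Bornology

/-- If `g(W \ H₁)` misses `E` for an open set `W ⊇ H₁` with `H₁` compact,
then `E \ g(H₁)` is closed in the one-point compactification. -/
theorem complement_of_image_closed
    {N : ℕ} (hN : 1 ≤ N)
    (E : Set (OnePoint (EuclideanSpace ℝ (Fin N))))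
    (hEne : E.Nonempty) (hEcomp : IsCompact E) (hEconn : IsConnected E)
    (hEinf : ∞ ∈ E)
    (g : EuclideanSpace ℝ (Fin N) → EuclideanSpace ℝ (Fin N))
    (hgc : Continuous g)
    (hgo : ∀ U : Set (EuclideanSpace ℝ (Fin N)), IsOpen U → IsOpen (g '' U))
    (hne : {x : EuclideanSpace ℝ (Fin N) |
      (g x : OnePoint (EuclideanSpace ℝ (Fin N))) ∈ E}.Nonempty)
    (H₁ : Set (EuclideanSpace ℝ (Fin N))) (hH₁ : IsCompact H₁)
    (W : Set (EuclideanSpace ℝ (Fin N))) (hW : IsOpen W) (hHW : H₁ ⊆ W)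
    (hmiss : ∀ x ∈ W \ H₁, (g x : OnePoint (EuclideanSpace ℝ (Fin N))) ∉ E) :
    IsClosed (E \ ((fun y : EuclideanSpace ℝ (Fin N) =>
      (y : OnePoint (EuclideanSpace ℝ (Fin N)))) '' (g '' H₁))) := by
  set c : EuclideanSpace ℝ (Fin N) → OnePoint (EuclideanSpace ℝ (Fin N)) :=
    fun y => (y : OnePoint (EuclideanSpace ℝ (Fin N))) with hc
  set K : Set (OnePoint (EuclideanSpace ℝ (Fin N))) := c '' (g '' H₁) with hK
  set U : Set (OnePoint (EuclideanSpace ℝ (Fin N))) := c '' (g '' W) with hU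
  have hUopen : IsOpen U := OnePoint.isOpenEmbedding_coe.isOpenMap _ (hgo W hW)
  have hKU : K ⊆ U := Set.image_mono (Set.image_mono hHW)
  have hEU : E ∩ U ⊆ K := by
    rintro x ⟨hxE, ⟨y, ⟨w, hwW, rfl⟩, rfl⟩⟩
    by_cases hw : w ∈ H₁
    · exact ⟨g w, Set.mem_image_of_mem g hw, rfl⟩
    · exact absurd hxE (hmiss w ⟨hwW, hw⟩)
  have heq : E \ K = E ∩ Uᶜ := by
    ext x
    constructor
    · rintro ⟨hxE, hxK⟩
      exact ⟨hxE, fun hxU => hxK (hEU ⟨hxE, hxU⟩)⟩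
    · rintro ⟨hxE, hxU⟩
      exact ⟨hxE, fun hxK => hxU (hKU hxK)⟩
  haveI : T4Space (OnePoint (EuclideanSpace ℝ (Fin N))) := ⟨⟩
  rw [show E \ K = E ∩ Uᶜ from heq]
  exact hEcomp.isClosed.inter hUopen.isClosed_compl
end

section
/- Let f : D → ℝ^N be a continuous open map on a domain D containing {x : |x| ≥ R}, and define M(r) = max{|f(x)| : |x| = r} for r ≥ R. Suppose s₀ > R is such that M(r) > M(R) for all r ≥ s₀. Then M is strictly increasing on [s₀, ∞). -/
open Metric


lemma exists_norm_gt' {N : ℕ} (hN : 1 ≤ N) (V : Set (EuclideanSpace ℝ (Fin N)))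
    (hV : IsOpen V) (v : EuclideanSpace ℝ (Fin N)) (hv : v ∈ V) :
    ∃ w ∈ V, ‖v‖ < ‖w‖ := by
  obtain ⟨ε, hε, hball⟩ := Metric.isOpen_iff.1 hV v hv
  by_cases h0 : v = 0
  · refine ⟨EuclideanSpace.single (⟨0, hN⟩ : Fin N) (ε/2), ?_, ?_⟩
    · apply hball
      subst h0
      rw [mem_ball_zero_iff, EuclideanSpace.norm_single, Real.norm_eq_abs,
        abs_of_pos (half_pos hε)]
      linarith
    · subst h0
      rw [norm_zero, EuclideanSpace.norm_single, Real.norm_eq_abs,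
        abs_of_pos (half_pos hε)]
      exact half_pos hε
  · have hvn : 0 < ‖v‖ := norm_pos_iff.2 h0
    set c : ℝ := 1 + ε / (2 * ‖v‖) with hc
    have hc1 : 1 < c := by
      have h : 0 < ε / (2 * ‖v‖) := by positivity
      rw [hc]; linarith
    refine ⟨c • v, ?_, ?_⟩
    · apply hball
      have : c • v - v = (c - 1) • v := by rw [sub_smul, one_smul]
      rw [mem_ball_iff_norm, this, norm_smul, Real.norm_eq_abs,
        abs_of_nonneg (by linarith)]
      have : (c - 1) * ‖v‖ = ε / 2 := by
        field_simp [hc]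
        linear_combination (2 * ‖v‖) * hc + div_mul_cancel₀ ε (ne_of_gt (by positivity : (0:ℝ) < 2 * ‖v‖))
      rw [this]; linarith
    · rw [norm_smul, Real.norm_eq_abs, abs_of_nonneg (by linarith)]
      nlinarith

lemma no_interior_max' {N : ℕ} (hN : 1 ≤ N)
    {D U : Set (EuclideanSpace ℝ (Fin N))} (hU : IsOpen U) (hUD : U ⊆ D)
    {f : EuclideanSpace ℝ (Fin N) → EuclideanSpace ℝ (Fin N)}
    (hfo : ∀ U ⊆ D, IsOpen U → IsOpen (f '' U))
    {x : EuclideanSpace ℝ (Fin N)} (hx : x ∈ U)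
    (hmax : ∀ y ∈ U, ‖f y‖ ≤ ‖f x‖) : False := by
  obtain ⟨w, hw, hlt⟩ := exists_norm_gt' hN _ (hfo U hUD hU) (f x) ⟨x, hx, rfl⟩
  obtain ⟨y, hy, rfl⟩ := hw
  exact absurd (hmax y hy) (not_le.2 hlt)

/-- For a continuous open map on a domain containing `{|x| ≥ R}`, if the
maximum modulus satisfies `M(r) > M(R)` for all `r ≥ s₀ > R`, then `M` is strictly
increasing on `[s₀, ∞)`. -/
theorem maximum_modulus_strictly_increasing
    {N : ℕ} (hN : 1 ≤ N) (R : ℝ) (hR : 0 < R)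
    (D : Set (EuclideanSpace ℝ (Fin N))) (hDopen : IsOpen D) (hDconn : IsConnected D)
    (hDR : {x : EuclideanSpace ℝ (Fin N) | R ≤ ‖x‖} ⊆ D)
    (f : EuclideanSpace ℝ (Fin N) → EuclideanSpace ℝ (Fin N))
    (hfc : ContinuousOn f D)
    (hfo : ∀ U ⊆ D, IsOpen U → IsOpen (f '' U))
    (M : ℝ → ℝ)
    (hM : ∀ r, M r = sSup ((fun x => ‖f x‖) '' sphere (0 : EuclideanSpace ℝ (Fin N)) r))
    (s₀ : ℝ) (hs₀ : R < s₀)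
    (hgrow : ∀ r, s₀ ≤ r → M R < M r) :
    StrictMonoOn M (Set.Ici s₀) := by
  -- maximum attainment on spheres
  have sphere_sub : ∀ r : ℝ, R ≤ r →
      (sphere (0 : EuclideanSpace ℝ (Fin N)) r : Set _) ⊆ D := by
    intro r hr x hx
    apply hDR
    rw [mem_sphere_zero_iff_norm] at hx
    simpa [hx] using hr
  have hMr : ∀ r : ℝ, R ≤ r → ∃ y : EuclideanSpace ℝ (Fin N),
      ‖y‖ = r ∧ M r = ‖f y‖ ∧ ∀ z : EuclideanSpace ℝ (Fin N), ‖z‖ = r → ‖f z‖ ≤ ‖f y‖ := by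
    intro r hr
    have hne : (sphere (0 : EuclideanSpace ℝ (Fin N)) r).Nonempty :=
      ⟨EuclideanSpace.single (⟨0, hN⟩ : Fin N) r, by
        simp [mem_sphere_zero_iff_norm, EuclideanSpace.norm_single,
          abs_of_pos (lt_of_lt_of_le hR hr)]⟩
    obtain ⟨y, hy, heq, hge⟩ := (isCompact_sphere (0 : EuclideanSpace ℝ (Fin N)) r)
      |>.exists_sSup_image_eq_and_ge hne ((hfc.mono (sphere_sub r hr)).norm)
    rw [mem_sphere_zero_iff_norm] at hy
    exact ⟨y, hy, by rw [hM r]; exact heq,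
      fun z hz => hge z (by rwa [mem_sphere_zero_iff_norm])⟩
  intro r₁ hr₁ r₂ hr₂ h12
  simp only [Set.mem_Ici] at hr₁ hr₂
  have hRr₁ : R ≤ r₁ := le_of_lt (lt_of_lt_of_le hs₀ hr₁)
  have hRr₂ : R ≤ r₂ := le_trans hRr₁ (le_of_lt h12)
  -- annulus
  set A : Set (EuclideanSpace ℝ (Fin N)) := closedBall 0 r₂ \ ball 0 R with hA
  have hAmem : ∀ x, x ∈ A ↔ R ≤ ‖x‖ ∧ ‖x‖ ≤ r₂ := by
    intro x
    simp [hA, mem_closedBall_zero_iff, mem_ball_zero_iff, not_lt, and_comm]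
  have hAD : A ⊆ D := fun x hx => hDR ((hAmem x).1 hx).1
  have hAcomp : IsCompact A :=
    (isCompact_closedBall 0 r₂).diff isOpen_ball
  have hAne : A.Nonempty := by
    refine ⟨EuclideanSpace.single (⟨0, hN⟩ : Fin N) R, ?_⟩
    rw [hAmem]
    simp [EuclideanSpace.norm_single, abs_of_pos hR]
    linarith
  obtain ⟨x₀, hx₀A, _, hx₀max⟩ :=
    hAcomp.exists_sSup_image_eq_and_ge hAne ((hfc.mono hAD).norm)
  -- open annulus
  set U : Set (EuclideanSpace ℝ (Fin N)) := ball 0 r₂ \ closedBall 0 R with hU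
  have hUopen : IsOpen U := isOpen_ball.sdiff isClosed_closedBall
  have hUmem : ∀ x, x ∈ U ↔ R < ‖x‖ ∧ ‖x‖ < r₂ := by
    intro x
    simp [hU, mem_closedBall_zero_iff, mem_ball_zero_iff, not_le, and_comm]
  have hUA : U ⊆ A := by
    intro x hx
    rw [hUmem] at hx; rw [hAmem]
    exact ⟨le_of_lt hx.1, le_of_lt hx.2⟩
  have hUD : U ⊆ D := fun x hx => hAD (hUA hx)
  obtain ⟨y₁, hy₁, hMy₁, hy₁max⟩ := hMr r₁ hRr₁
  obtain ⟨yR, hyR, hMyR, hyRmax⟩ := hMr R le_rfl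
  -- goal
  by_contra hcon
  push_neg at hcon
  -- ‖f x₀‖ ≤ M r₁
  have hfx₀ : ‖f x₀‖ ≤ M r₁ := by
    have := (hAmem x₀).1 hx₀A
    rcases eq_or_lt_of_le this.1 with hb | hb
    · -- on inner sphere? then ≤ M R < M r₁
      have h1 : ‖f x₀‖ ≤ M R := by
        rw [hMyR]
        exact hyRmax x₀ hb.symm
      linarith [hgrow r₁ hr₁]
    · rcases eq_or_lt_of_le this.2 with hb2 | hb2
      · -- on outer sphere: ≤ M r₂ ≤ M r₁
        obtain ⟨y₂, hy₂, hMy₂, hy₂max⟩ := hMr r₂ hRr₂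
        calc ‖f x₀‖ ≤ ‖f y₂‖ := hy₂max x₀ hb2
          _ = M r₂ := hMy₂.symm
          _ ≤ M r₁ := hcon
      · -- interior: contradiction
        exact absurd (no_interior_max' hN hUopen hUD hfo
          ((hUmem x₀).2 ⟨hb, hb2⟩)
          (fun y hy => hx₀max y (hUA hy))) (fun h => h)
  -- y₁ is a max on A, interior point: contradiction
  have hy₁U : y₁ ∈ U := (hUmem y₁).2 ⟨by rw [hy₁]; exact lt_of_lt_of_le hs₀ hr₁,
    by rw [hy₁]; exact h12⟩
  exact no_interior_max' hN hUopen hUD hfo hy₁U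
    (fun y hy => le_trans (hx₀max y (hUA hy)) (hMy₁ ▸ hfx₀))
end

section
/- Define f : ℝ³ → ℝ³ in cylindrical coordinates by f(0,0,x₃) = (0,0,x₃) and f(r cos θ, r sin θ, x₃) = (ρ cos(θ+π), ρ sin(θ+π), x₃) where ρ = r·e^{λ cos θ} and λ > 0. Then f ∘ f is the identity on ℝ³. -/
/-- the map `f(r cos θ, r sin θ, x₃) = (r e^{λ cos θ} cos(θ+π),
r e^{λ cos θ} sin(θ+π), x₃)`, fixing the `x₃`-axis, is an involution of `ℝ³`. -/
theorem cylindrical_map_involution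
    (lam : ℝ) (hlam : 0 < lam)
    (f : ℝ × ℝ × ℝ → ℝ × ℝ × ℝ)
    (h0 : ∀ x₃ : ℝ, f (0, 0, x₃) = (0, 0, x₃))
    (hf : ∀ r θ x₃ : ℝ, 0 < r →
      f (r * Real.cos θ, r * Real.sin θ, x₃) =
        (r * Real.exp (lam * Real.cos θ) * Real.cos (θ + Real.pi),
         r * Real.exp (lam * Real.cos θ) * Real.sin (θ + Real.pi), x₃)) :
    ∀ p : ℝ × ℝ × ℝ, f (f p) = p := by
  rintro ⟨x, y, z⟩
  by_cases hxy : x = 0 ∧ y = 0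
  · obtain ⟨rfl, rfl⟩ := hxy
    rw [h0, h0]
  · set c : ℂ := ⟨x, y⟩ with hc
    have hc0 : c ≠ 0 := fun h => hxy ⟨congrArg Complex.re h, congrArg Complex.im h⟩
    set r : ℝ := ‖c‖ with hr
    have hrpos : 0 < r := norm_pos_iff.mpr hc0
    set θ : ℝ := Complex.arg c with hθ
    have hx : x = r * Real.cos θ := (Complex.norm_mul_cos_arg c).symm
    have hy : y = r * Real.sin θ := (Complex.norm_mul_sin_arg c).symm
    rw [hx, hy, hf r θ z hrpos]
    have hr2 : 0 < r * Real.exp (lam * Real.cos θ) :=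
      mul_pos hrpos (Real.exp_pos _)
    rw [hf _ _ z hr2]
    have hcos : Real.cos (θ + Real.pi) = -Real.cos θ := Real.cos_add_pi θ
    have h2 : θ + Real.pi + Real.pi = θ + 2 * Real.pi := by ring
    have hc2 : Real.cos (θ + 2 * Real.pi) = Real.cos θ := Real.cos_add_two_pi θ
    have hs2 : Real.sin (θ + 2 * Real.pi) = Real.sin θ := Real.sin_add_two_pi θ
    rw [hcos, h2, hc2, hs2]
    have hexp : Real.exp (lam * Real.cos θ) * Real.exp (lam * -Real.cos θ) = 1 := by
      rw [← Real.exp_add]; ring_nf; exact Real.exp_zero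
    refine Prod.ext ?_ (Prod.ext ?_ rfl) <;> simp only
    · calc r * Real.exp (lam * Real.cos θ) * Real.exp (lam * -Real.cos θ) * Real.cos θ
          = r * (Real.exp (lam * Real.cos θ) * Real.exp (lam * -Real.cos θ)) * Real.cos θ := by ring
        _ = r * Real.cos θ := by rw [hexp]; ring
    · calc r * Real.exp (lam * Real.cos θ) * Real.exp (lam * -Real.cos θ) * Real.sin θ
          = r * (Real.exp (lam * Real.cos θ) * Real.exp (lam * -Real.cos θ)) * Real.sin θ := by ring
        _ = r * Real.sin θ := by rw [hexp]; ring
end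

section
/- Define f : ℝ³ → ℝ³ in cylindrical coordinates by f(r cos θ, r sin θ, x₃) = (r e^{λ cos θ} cos(θ+π), r e^{λ cos θ} sin(θ+π), x₃) with f fixing the x₃-axis, for fixed λ > 0. Then f satisfies f(2x) = 2f(x) for all x ∈ ℝ³, and the escaping set I(f) = {x : |fⁿ(x)| → ∞} is empty. -/
open Filter

/-- Polar decomposition of a nonzero point in the plane. -/
lemma exists_polar (a b : ℝ) (h : ¬(a = 0 ∧ b = 0)) :
    ∃ r θ : ℝ, 0 < r ∧ a = r * Real.cos θ ∧ b = r * Real.sin θ := by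
  set z : ℂ := ⟨a, b⟩ with hz
  have hz0 : z ≠ 0 := by
    intro h0
    apply h
    constructor
    · simpa using congrArg Complex.re h0
    · simpa using congrArg Complex.im h0
  have habs : (0:ℝ) < ‖z‖ := norm_pos_iff.mpr hz0
  refine ⟨‖z‖, z.arg, habs, ?_, ?_⟩
  · rw [Complex.cos_arg hz0]
    field_simp
    rfl
  · rw [Complex.sin_arg z]
    field_simp
    rfl

/-- the cylindrical map `f` satisfies `f(2x) = 2 f(x)` and its escaping
set `I(f) = {x : |fⁿ(x)| → ∞}` is empty. -/
theorem cylindrical_map_homogeneous_and_empty_escaping_set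
    (lam : ℝ) (hlam : 0 < lam)
    (f : ℝ × ℝ × ℝ → ℝ × ℝ × ℝ)
    (h0 : ∀ x₃ : ℝ, f (0, 0, x₃) = (0, 0, x₃))
    (hf : ∀ r θ x₃ : ℝ, 0 < r →
      f (r * Real.cos θ, r * Real.sin θ, x₃) =
        (r * Real.exp (lam * Real.cos θ) * Real.cos (θ + Real.pi),
         r * Real.exp (lam * Real.cos θ) * Real.sin (θ + Real.pi), x₃)) :
    (∀ x : ℝ × ℝ × ℝ, f ((2 : ℝ) • x) = (2 : ℝ) • f x) ∧
    {x : ℝ × ℝ × ℝ | Tendsto (fun n => ‖f^[n] x‖) atTop atTop} = ∅ := by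
  -- involution
  have hinv : ∀ x : ℝ × ℝ × ℝ, f (f x) = x := by
    rintro ⟨a, b, c⟩
    by_cases h : a = 0 ∧ b = 0
    · obtain ⟨ha, hb⟩ := h
      subst ha; subst hb
      rw [h0, h0]
    · obtain ⟨r, θ, hr, ha, hb⟩ := exists_polar a b h
      subst ha; subst hb
      rw [hf r θ c hr]
      have hr' : 0 < r * Real.exp (lam * Real.cos θ) := by positivity
      rw [hf _ (θ + Real.pi) c hr']
      have h1 : Real.cos (θ + Real.pi) = -Real.cos θ := Real.cos_add_pi θ
      have h2 : θ + Real.pi + Real.pi = θ + 2 * Real.pi := by ring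
      have h3 : Real.cos (θ + 2 * Real.pi) = Real.cos θ := by
        simpa using Real.cos_add_int_mul_two_pi θ 1
      have h4 : Real.sin (θ + 2 * Real.pi) = Real.sin θ := by
        simpa using Real.sin_add_int_mul_two_pi θ 1
      have h5 : r * Real.exp (lam * Real.cos θ) *
          Real.exp (lam * Real.cos (θ + Real.pi)) = r := by
        rw [h1, mul_assoc, ← Real.exp_add]
        simp
      rw [h2, h3, h4, h1]
      rw [h1] at h5
      rw [h5]
  constructor
  · rintro ⟨a, b, c⟩
    by_cases h : a = 0 ∧ b = 0
    · obtain ⟨ha, hb⟩ := h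
      subst ha; subst hb
      simp only [Prod.smul_mk, smul_zero, smul_eq_mul, mul_zero]
      rw [h0, h0]
      simp [Prod.smul_mk, smul_eq_mul]
    · obtain ⟨r, θ, hr, ha, hb⟩ := exists_polar a b h
      subst ha; subst hb
      have h2r : (0:ℝ) < 2 * r := by linarith
      have e1 : (2:ℝ) • ((r * Real.cos θ, r * Real.sin θ, c) : ℝ × ℝ × ℝ)
          = (2 * r * Real.cos θ, 2 * r * Real.sin θ, 2 * c) := by
        simp [Prod.smul_mk, smul_eq_mul]; ring_nf; constructor <;> trivial
      rw [e1, hf _ θ _ h2r, hf r θ c hr]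
      simp [Prod.smul_mk, smul_eq_mul]
      constructor
      · ring
      · ring
  · ext x
    simp only [Set.mem_setOf_eq, Set.mem_empty_iff_false, iff_false]
    intro ht
    have horb : ∀ n : ℕ, f^[n] x = x ∨ f^[n] x = f x := by
      intro n
      induction n with
      | zero => left; rfl
      | succ n ih =>
        rw [Function.iterate_succ_apply']
        rcases ih with h | h
        · right; rw [h]
        · left; rw [h, hinv]
    obtain ⟨n, hn⟩ := (ht.eventually (eventually_gt_atTop (max ‖x‖ ‖f x‖))).exists
    rcases horb n with h | h <;> rw [h] at hn
    · exact absurd hn (not_lt.2 (le_max_left _ _))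
    · exact absurd hn (not_lt.2 (le_max_right _ _))
end

section
/- Let f : ℝ^N → ℝ^N be continuous and suppose for each j ≥ 0 the restriction of f to a bounded open set Dⱼ ⊆ ℝ^N maps onto {y ∈ ℝ^N ∪ {∞} : |y| > Rⱼ} (with a pole xⱼ ∈ Dⱼ mapped to ∞), where Rⱼ → ∞ and D_{j+1} ⊆ {x : |x| > 2Rⱼ}. Define Cⱼ = {x ∈ Dⱼ : f(x) ∈ D_{j+1}}. Then for each j, Cⱼ is nonempty and its closure is contained in Dⱼ, given that |f(x)| = Rⱼ for all x ∈ ∂Dⱼ. -/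
open OnePoint Bornology

/-- in the quasimeromorphic "pole-jumping" construction, each set
`Cⱼ = {x ∈ Dⱼ : f(x) ∈ D_{j+1}}` is nonempty and its closure is contained in `Dⱼ`. -/
theorem pole_jumping_sets_nonempty_with_closure_inside
    {N : ℕ} (hN : 1 ≤ N)
    (f : EuclideanSpace ℝ (Fin N) → OnePoint (EuclideanSpace ℝ (Fin N)))
    (hfc : Continuous f)
    (R : ℕ → ℝ) (hRpos : ∀ j, 0 < R j)
    (hRtop : Filter.Tendsto R Filter.atTop Filter.atTop)
    (D : ℕ → Set (EuclideanSpace ℝ (Fin N)))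
    (hDopen : ∀ j, IsOpen (D j)) (hDbdd : ∀ j, IsBounded (D j))
    (x : ℕ → EuclideanSpace ℝ (Fin N))
    (hpole : ∀ j, x j ∈ D j ∧ f (x j) = ∞)
    (hsurj : ∀ j, f '' D j = insert ∞
      ((fun y : EuclideanSpace ℝ (Fin N) => (y : OnePoint (EuclideanSpace ℝ (Fin N)))) ''
        {y : EuclideanSpace ℝ (Fin N) | R j < ‖y‖}))
    (hfar : ∀ j, D (j + 1) ⊆ {y : EuclideanSpace ℝ (Fin N) | 2 * R j < ‖y‖})
    (hbdry : ∀ j, ∀ y ∈ frontier (D j),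
      ∃ w : EuclideanSpace ℝ (Fin N),
        f y = (w : OnePoint (EuclideanSpace ℝ (Fin N))) ∧ ‖w‖ = R j)
    (C : ℕ → Set (EuclideanSpace ℝ (Fin N)))
    (hC : ∀ j, C j = {y ∈ D j | f y ∈
      (fun w : EuclideanSpace ℝ (Fin N) => (w : OnePoint (EuclideanSpace ℝ (Fin N)))) ''
        D (j + 1)}) :
    ∀ j : ℕ, (C j).Nonempty ∧ closure (C j) ⊆ D j := by
  intro j
  have hRj := hRpos j
  constructor
  · -- nonempty
    have hx : (x (j+1) : OnePoint (EuclideanSpace ℝ (Fin N))) ∈ f '' D j := by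
      rw [hsurj j]
      right
      refine ⟨x (j+1), ?_, rfl⟩
      have h2 := hfar j (hpole (j+1)).1
      simp only [Set.mem_setOf_eq] at h2 ⊢
      linarith
    obtain ⟨z, hz, hfz⟩ := hx
    exact ⟨z, by rw [hC j]; exact ⟨hz, x (j+1), (hpole (j+1)).1, hfz.symm⟩⟩
  · -- closure inside
    have hKcl : IsCompact (closure (D (j+1))) :=
      (hDbdd (j+1)).isCompact_closure
    have hclosed : IsClosed ((fun w : EuclideanSpace ℝ (Fin N) =>
        (w : OnePoint (EuclideanSpace ℝ (Fin N)))) '' closure (D (j+1))) :=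
      OnePoint.isClosed_image_coe.mpr ⟨isClosed_closure, hKcl⟩
    have hsub : closure (C j) ⊆ f ⁻¹' ((fun w : EuclideanSpace ℝ (Fin N) =>
        (w : OnePoint (EuclideanSpace ℝ (Fin N)))) '' closure (D (j+1))) := by
      apply closure_minimal _ (hclosed.preimage hfc)
      intro y hy
      rw [hC j] at hy
      obtain ⟨w, hw, hfw⟩ := hy.2
      exact ⟨w, subset_closure hw, hfw⟩
    intro p hp
    have hpD : p ∈ closure (D j) := closure_mono (by rw [hC j]; exact Set.sep_subset _ _) hp
    by_contra hpn
    have hfr : p ∈ frontier (D j) := ⟨hpD, by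
      rwa [(hDopen j).interior_eq]⟩
    obtain ⟨w, hfp, hwn⟩ := hbdry j p hfr
    obtain ⟨w', hw', hw'e⟩ := hsub hp
    rw [hfp] at hw'e
    have : w' = w := OnePoint.coe_injective hw'e
    subst this
    have h2 : 2 * R j ≤ ‖w'‖ := by
      have : closure (D (j+1)) ⊆ {y : EuclideanSpace ℝ (Fin N) | 2 * R j ≤ ‖y‖} := by
        apply closure_minimal
        · intro y hy
          show 2 * R j ≤ ‖y‖
          exact (hfar j hy).le
        · exact isClosed_le continuous_const continuous_norm
      exact this hw'
    rw [hwn] at h2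
    linarith
end

section
/- Let f : ℝ^N → ℝ^N be continuous, and suppose there are nonempty compact connected sets Kₙ ⊆ ℝ^N ∪ {∞} with ∞ ∈ Kₙ, K_{n+1} ⊆ Kₙ, and a point ẑ ∈ ⋂ₙ Kₙ with ẑ ≠ ∞. Then K = ⋂ₙ Kₙ is compact and connected, and the connected component of K \ {∞} containing ẑ is an unbounded subset of ℝ^N. -/
open OnePoint Bornology
open Set Metric

open Set

/-- clopen separation in compact T2 space -/
theorem aux_clopen_sep {X : Type*} [TopologicalSpace X] [CompactSpace X] [T2Space X]
    (x : X) (D : Set X) (hD : IsClosed D) (hdisj : Disjoint (connectedComponent x) D) :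
    ∃ V : Set X, IsClopen V ∧ connectedComponent x ⊆ V ∧ Disjoint V D := by
  have h : D ∩ ⋂ s : { s : Set X // IsClopen s ∧ x ∈ s }, (s : Set X) = ∅ := by
    rw [← connectedComponent_eq_iInter_isClopen]
    exact (disjoint_iff_inter_eq_empty.1 hdisj.symm)
  obtain ⟨t, ht⟩ := hD.isCompact.elim_finite_subfamily_closed _
    (fun s : { s : Set X // IsClopen s ∧ x ∈ s } => s.2.1.1) h
  refine ⟨⋂ i ∈ t, (i : Set X), isClopen_biInter_finset fun i _ => i.2.1, ?_, ?_⟩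
  · exact subset_iInter₂ fun s _ => s.2.1.connectedComponent_subset s.2.2
  · rw [disjoint_iff_inter_eq_empty, inter_comm]
    exact ht

/-- connected intersection of nested continua -/
theorem aux_conn_iInter {X : Type*} [TopologicalSpace X] [T2Space X]
    (K : ℕ → Set X) (hc : ∀ n, IsCompact (K n)) (hconn : ∀ n, IsPreconnected (K n))
    (hmono : ∀ n, K (n + 1) ⊆ K n) (hne : (⋂ n, K n).Nonempty) :
    IsConnected (⋂ n, K n) := by
  have hanti : Antitone K := antitone_nat_of_succ_le hmono
  have hcl : ∀ n, IsClosed (K n) := fun n => (hc n).isClosed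
  have hKcl : IsClosed (⋂ n, K n) := isClosed_iInter hcl
  refine ⟨hne, (isPreconnected_iff_subset_of_fully_disjoint_closed hKcl).2 ?_⟩
  intro A B hA hB hAB hd
  have hAc : IsCompact (A ∩ ⋂ n, K n) := ((hc 0).of_isClosed_subset hKcl (iInter_subset _ 0)).inter_left hA
  have hBc : IsCompact (B ∩ ⋂ n, K n) := ((hc 0).of_isClosed_subset hKcl (iInter_subset _ 0)).inter_left hB
  obtain ⟨U, V, hU, hV, hAU, hBV, hUV⟩ := SeparatedNhds.of_isCompact_isCompact hAc hBc
    (hd.mono inter_subset_left inter_subset_left)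
  -- some K n ⊆ U ∪ V
  have hempty : (⋂ n, K n ∩ (U ∪ V)ᶜ) = ∅ := by
    rw [← iInter_inter]
    apply eq_empty_of_subset_empty
    rintro y ⟨hy, hyc⟩
    rcases hAB hy with h | h
    · exact hyc (Or.inl (hAU ⟨h, hy⟩))
    · exact hyc (Or.inr (hBV ⟨h, hy⟩))
  have : ∃ n, K n ∩ (U ∪ V)ᶜ = ∅ := by
    by_contra hcon
    push_neg at hcon
    have := IsCompact.nonempty_iInter_of_sequence_nonempty_isCompact_isClosed
      (fun n => K n ∩ (U ∪ V)ᶜ) (fun n => inter_subset_inter_left _ (hmono n))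
      (fun n => hcon n) ((hc 0).inter_right (isClosed_compl_iff.2 (hU.union hV)))
      (fun n => (hcl n).inter (isClosed_compl_iff.2 (hU.union hV)))
    rw [hempty] at this
    exact this.ne_empty rfl
  obtain ⟨n, hn⟩ := this
  have hKn : K n ⊆ U ∪ V := by
    intro y hy
    by_contra hyc
    exact absurd hn (Nonempty.ne_empty ⟨y, hy, hyc⟩)
  -- K n is preconnected: it is inside U or inside V
  have hKU : K n ⊆ U ∨ K n ⊆ V := by
    rcases (hconn n).subset_or_subset hU hV (by rwa [disjoint_iff_inter_eq_empty] at hUV ⊢) hKn with h | h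
    · exact Or.inl h
    · exact Or.inr h
  have hKsub : (⋂ m, K m) ⊆ K n := iInter_subset _ n
  rcases hKU with h | h
  · left
    intro y hy
    rcases hAB hy with hyA | hyB
    · exact hyA
    · exact absurd (hUV.le_bot ⟨h (hKsub hy), hBV ⟨hyB, hy⟩⟩) (by simp)
  · right
    intro y hy
    rcases hAB hy with hyA | hyB
    · exact absurd (hUV.le_bot ⟨hAU ⟨hyA, hy⟩, h (hKsub hy)⟩) (by simp)
    · exact hyB

/-- the intersection `K` of a nested sequence of continua in
`ℝ^N ∪ {∞}` containing `∞` and a finite point `ẑ` is compact and connected, and the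
connected component of `K \ {∞}` containing `ẑ` is an unbounded subset of `ℝ^N`. -/
theorem nested_continua_intersection_component_unbounded
    {N : ℕ} (hN : 1 ≤ N)
    (f : EuclideanSpace ℝ (Fin N) → EuclideanSpace ℝ (Fin N)) (hf : Continuous f)
    (K : ℕ → Set (OnePoint (EuclideanSpace ℝ (Fin N))))
    (hKne : ∀ n, (K n).Nonempty) (hKcomp : ∀ n, IsCompact (K n))
    (hKconn : ∀ n, IsConnected (K n)) (hKinf : ∀ n, ∞ ∈ K n)
    (hKmono : ∀ n, K (n + 1) ⊆ K n)
    (z : EuclideanSpace ℝ (Fin N))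
    (hz : ∀ n, (z : OnePoint (EuclideanSpace ℝ (Fin N))) ∈ K n) :
    IsCompact (⋂ n, K n) ∧ IsConnected (⋂ n, K n) ∧
    ¬ IsBounded {x : EuclideanSpace ℝ (Fin N) |
      (x : OnePoint (EuclideanSpace ℝ (Fin N))) ∈
        connectedComponentIn ((⋂ n, K n) \ {∞})
          (z : OnePoint (EuclideanSpace ℝ (Fin N)))} := by
  haveI hT2 : T2Space (OnePoint (EuclideanSpace ℝ (Fin N))) := by
    have : R1Space (OnePoint (EuclideanSpace ℝ (Fin N))) := inferInstance
    infer_instance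
  have hKcl : ∀ n, IsClosed (K n) := fun n => (hKcomp n).isClosed
  have hKinfcl : IsClosed (⋂ n, K n) := isClosed_iInter hKcl
  have hcomp : IsCompact (⋂ n, K n) :=
    (hKcomp 0).of_isClosed_subset hKinfcl (iInter_subset _ 0)
  have hzK : (z : OnePoint (EuclideanSpace ℝ (Fin N))) ∈ ⋂ n, K n := mem_iInter.2 hz
  have hinfK : (∞ : OnePoint (EuclideanSpace ℝ (Fin N))) ∈ ⋂ n, K n := mem_iInter.2 hKinf
  have hconn : IsConnected (⋂ n, K n) :=
    aux_conn_iInter K hKcomp (fun n => (hKconn n).isPreconnected) hKmono ⟨_, hzK⟩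
  refine ⟨hcomp, hconn, ?_⟩
  intro hb
  set S : Set (EuclideanSpace ℝ (Fin N)) :=
    {x : EuclideanSpace ℝ (Fin N) |
      (x : OnePoint (EuclideanSpace ℝ (Fin N))) ∈
        connectedComponentIn ((⋂ n, K n) \ {∞})
          (z : OnePoint (EuclideanSpace ℝ (Fin N)))} with hS_def
  set C : Set (OnePoint (EuclideanSpace ℝ (Fin N))) :=
    connectedComponentIn ((⋂ n, K n) \ {∞}) (z : OnePoint (EuclideanSpace ℝ (Fin N)))
    with hC_def
  have hzmem : (z : OnePoint (EuclideanSpace ℝ (Fin N))) ∈ (⋂ n, K n) \ {∞} :=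
    ⟨hzK, coe_ne_infty z⟩
  have hzC : (z : OnePoint (EuclideanSpace ℝ (Fin N))) ∈ C := mem_connectedComponentIn hzmem
  have hCsub : C ⊆ (⋂ n, K n) \ {∞} := connectedComponentIn_subset _ _
  obtain ⟨r₀, hr₀⟩ := hb.subset_closedBall 0
  set r : ℝ := r₀ + 1 with hr_def
  have hSball : S ⊆ ball (0 : EuclideanSpace ℝ (Fin N)) r := fun x hx =>
    lt_of_le_of_lt (mem_closedBall.1 (hr₀ hx)) (by simp [hr_def])
  have hCball : C ⊆ (fun x : EuclideanSpace ℝ (Fin N) =>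
      (x : OnePoint (EuclideanSpace ℝ (Fin N)))) '' ball (0 : EuclideanSpace ℝ (Fin N)) r := by
    intro y hy
    obtain ⟨x, rfl⟩ : ∃ x : EuclideanSpace ℝ (Fin N),
        (x : OnePoint (EuclideanSpace ℝ (Fin N))) = y := by
      rcases y with (_ | x)
      · exact absurd rfl (hCsub hy).2
      · exact ⟨x, rfl⟩
    exact ⟨x, hSball hy, rfl⟩
  -- the compact set F
  set F : Set (OnePoint (EuclideanSpace ℝ (Fin N))) :=
    (⋂ n, K n) ∩ (fun x : EuclideanSpace ℝ (Fin N) =>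
      (x : OnePoint (EuclideanSpace ℝ (Fin N)))) '' closedBall (0 : EuclideanSpace ℝ (Fin N)) r
    with hF_def
  have hFcomp : IsCompact F :=
    hcomp.inter_right (((isCompact_closedBall 0 r).image continuous_coe).isClosed)
  have hFsub : F ⊆ (⋂ n, K n) \ {∞} := by
    rintro y ⟨hy1, x, _, rfl⟩
    exact ⟨hy1, coe_ne_infty x⟩
  have hzF : (z : OnePoint (EuclideanSpace ℝ (Fin N))) ∈ F :=
    ⟨hzK, z, ball_subset_closedBall (hSball hzC), rfl⟩
  -- C is the connected component of z in F
  have hCF : C = connectedComponentIn F (z : OnePoint (EuclideanSpace ℝ (Fin N))) := by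
    apply Subset.antisymm
    · exact isPreconnected_connectedComponentIn.subset_connectedComponentIn hzC
        (fun y hy => ⟨(hCsub hy).1, (image_mono ball_subset_closedBall) (hCball hy)⟩)
    · exact isPreconnected_connectedComponentIn.subset_connectedComponentIn
        (mem_connectedComponentIn hzF) ((connectedComponentIn_subset _ _).trans hFsub)
  haveI : CompactSpace F := isCompact_iff_compactSpace.1 hFcomp
  set z' : F := ⟨(z : OnePoint (EuclideanSpace ℝ (Fin N))), hzF⟩ with hz'_def
  have himage : C = (fun p : F => (p : OnePoint (EuclideanSpace ℝ (Fin N)))) ''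
      connectedComponent z' := by
    rw [hCF, connectedComponentIn_eq_image hzF]
  -- the closed "boundary ring" in F
  set D : Set F := (fun p : F => (p : OnePoint (EuclideanSpace ℝ (Fin N)))) ⁻¹'
      ((fun x : EuclideanSpace ℝ (Fin N) => (x : OnePoint (EuclideanSpace ℝ (Fin N)))) ''
        ball (0 : EuclideanSpace ℝ (Fin N)) r)ᶜ with hD_def
  have hDcl : IsClosed D :=
    (isClosed_compl_iff.2 (isOpenMap_coe _ isOpen_ball)).preimage continuous_subtype_val
  have hdisj : Disjoint (connectedComponent z') D := by
    rw [disjoint_iff_inter_eq_empty]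
    apply eq_empty_of_subset_empty
    rintro p ⟨hp1, hp2⟩
    exact hp2 (hCball (himage ▸ ⟨p, hp1, rfl⟩))
  obtain ⟨V, hVclopen, hVcc, hVD⟩ := aux_clopen_sep z' D hDcl hdisj
  set W : Set (OnePoint (EuclideanSpace ℝ (Fin N))) :=
    (fun p : F => (p : OnePoint (EuclideanSpace ℝ (Fin N)))) '' V with hW_def
  have hWball : W ⊆ (fun x : EuclideanSpace ℝ (Fin N) =>
      (x : OnePoint (EuclideanSpace ℝ (Fin N)))) '' ball (0 : EuclideanSpace ℝ (Fin N)) r := by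
    rintro y ⟨p, hp, rfl⟩
    by_contra hcon
    exact absurd (hVD.le_bot ⟨hp, hcon⟩) (by simp)
  have hWcl : IsClosed W :=
    (hFcomp.isClosed.isClosedEmbedding_subtypeVal.isClosed_iff_image_isClosed).1 hVclopen.1
  obtain ⟨U, hU, hVU⟩ := isOpen_induced_iff.1 hVclopen.2
  have hWUF : W = U ∩ F := by
    ext y
    constructor
    · rintro ⟨p, hp, rfl⟩
      refine ⟨?_, p.2⟩
      rw [← hVU] at hp
      exact hp
    · rintro ⟨hyU, hyF⟩
      refine ⟨⟨y, hyF⟩, ?_, rfl⟩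
      rw [← hVU]
      exact hyU
  set O : Set (OnePoint (EuclideanSpace ℝ (Fin N))) :=
    U ∩ (fun x : EuclideanSpace ℝ (Fin N) =>
      (x : OnePoint (EuclideanSpace ℝ (Fin N)))) '' ball (0 : EuclideanSpace ℝ (Fin N)) r
    with hO_def
  have hO : IsOpen O := hU.inter (isOpenMap_coe _ isOpen_ball)
  have hOK : O ∩ ⋂ n, K n = W := by
    apply Subset.antisymm
    · rintro y ⟨⟨hyU, hyb⟩, hyK⟩
      rw [hWUF]
      exact ⟨hyU, hyK, (image_mono ball_subset_closedBall) hyb⟩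
    · intro y hy
      have h2 := hWUF ▸ hy
      exact ⟨⟨h2.1, hWball hy⟩, h2.2.1⟩
  have hzW : (z : OnePoint (EuclideanSpace ℝ (Fin N))) ∈ W :=
    ⟨z', hVcc mem_connectedComponent, rfl⟩
  have hinfW : (∞ : OnePoint (EuclideanSpace ℝ (Fin N))) ∉ W := fun h => by
    obtain ⟨x, _, hx⟩ := hWball h
    exact coe_ne_infty x hx
  have hsep := hconn.isPreconnected O Wᶜ hO hWcl.isOpen_compl
    (fun y hy => by
      by_cases hyW : y ∈ W
      · exact Or.inl (hOK ▸ hyW : y ∈ O ∩ ⋂ n, K n).1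
      · exact Or.inr hyW)
    ⟨(z : OnePoint (EuclideanSpace ℝ (Fin N))), hzK, (hOK ▸ hzW : _ ∈ O ∩ ⋂ n, K n).1⟩
    ⟨(∞ : OnePoint (EuclideanSpace ℝ (Fin N))), hinfK, hinfW⟩
  obtain ⟨y, hyK, hyO, hyW⟩ := hsep
  exact hyW (hOK ▸ (⟨hyO, hyK⟩ : y ∈ O ∩ ⋂ n, K n))
end

section
/- Let f : ℝ^N → ℝ^N be continuous and (γₘ) compact sets with γ_{m+1} ⊆ f(γₘ) and γₘ ⊆ {x : |x| > 2^{m+2}ρ} for a fixed ρ > 0. Then there exists ẑ ∈ γ₀ with f^m(ẑ) ∈ γₘ for all m ≥ 0; in particular |f^m(ẑ)| → ∞, so the escaping set I(f) = {x : |fⁿ(x)| → ∞} is nonempty. -/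
open Filter
set_option maxHeartbeats 800000


private lemma aux_pow_tendsto (ρ : ℝ) (hρ : 0 < ρ) :
    Filter.Tendsto (fun n : ℕ => (2 : ℝ) ^ (n + 2) * ρ) Filter.atTop Filter.atTop := by
  have h : Filter.Tendsto (fun n : ℕ => (2:ℝ)^n) Filter.atTop Filter.atTop :=
    tendsto_pow_atTop_atTop_of_one_lt one_lt_two
  have h2 := h.atTop_mul_const (show (0:ℝ) < 4*ρ by positivity)
  refine h2.congr fun n => ?_
  rw [pow_add]; ring

/-- if `γ_{m+1} ⊆ f(γₘ)` for nonempty compact sets with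
`γₘ ⊆ {|x| > 2^{m+2} ρ}`, then some `ẑ ∈ γ₀` has `f^m(ẑ) ∈ γₘ` for all `m`; in
particular the escaping set of `f` is nonempty. -/
theorem escaping_set_nonempty_from_covering
    {N : ℕ} (hN : 1 ≤ N)
    (f : EuclideanSpace ℝ (Fin N) → EuclideanSpace ℝ (Fin N)) (hf : Continuous f)
    (ρ : ℝ) (hρ : 0 < ρ)
    (γ : ℕ → Set (EuclideanSpace ℝ (Fin N)))
    (hγne : ∀ m, (γ m).Nonempty) (hγcomp : ∀ m, IsCompact (γ m))
    (hγ : ∀ m, γ (m + 1) ⊆ f '' γ m)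
    (hγfar : ∀ m, γ m ⊆ {x : EuclideanSpace ℝ (Fin N) | 2 ^ (m + 2) * ρ < ‖x‖}) :
    (∃ z ∈ γ 0, (∀ m : ℕ, f^[m] z ∈ γ m) ∧
      Tendsto (fun n : ℕ => ‖f^[n] z‖) atTop atTop) ∧
    {x : EuclideanSpace ℝ (Fin N) |
      Tendsto (fun n : ℕ => ‖f^[n] x‖) atTop atTop}.Nonempty := by
  -- pull back points along the covering chain
  have pull : ∀ n, ∀ x ∈ γ n, ∃ z, (∀ k ≤ n, f^[k] z ∈ γ k) ∧ f^[n] z = x := by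
    intro n
    induction n with
    | zero => intro x hx; exact ⟨x, fun k hk => by simpa [Nat.le_zero.mp hk] using hx, rfl⟩
    | succ n ih =>
      intro x hx
      obtain ⟨y, hy, hfy⟩ := hγ n hx
      obtain ⟨z, hz, hzn⟩ := ih y hy
      refine ⟨z, ?_, by rw [Function.iterate_succ_apply', hzn, hfy]⟩
      intro k hk
      rcases Nat.lt_or_ge k (n + 1) with h | h
      · exact hz k (Nat.lt_succ_iff.mp h)
      · have : k = n + 1 := le_antisymm hk h
        subst this
        rw [Function.iterate_succ_apply', hzn, hfy]; exact hx
  -- the nested compact sets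
  set K : ℕ → Set (EuclideanSpace ℝ (Fin N)) :=
    fun n => {z | ∀ k ≤ n, f^[k] z ∈ γ k} with hK
  have hKne : ∀ n, (K n).Nonempty := by
    intro n
    obtain ⟨x, hx⟩ := hγne n
    obtain ⟨z, hz, -⟩ := pull n x hx
    exact ⟨z, hz⟩
  have hKclosed : ∀ n, IsClosed (K n) := by
    intro n
    have : K n = ⋂ k ∈ Finset.range (n + 1), (f^[k]) ⁻¹' γ k := by
      ext z
      simp only [hK, Set.mem_setOf_eq, Set.mem_iInter, Finset.mem_range, Nat.lt_succ_iff,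
        Set.mem_preimage]
    rw [this]
    exact isClosed_biInter fun k _ =>
      ((hγcomp k).isClosed).preimage (hf.iterate k)
  have hKmono : ∀ n, K (n + 1) ⊆ K n := fun n z hz k hk => hz k (hk.trans (Nat.le_succ n))
  have hK0 : IsCompact (K 0) := by
    have hsub : K 0 ⊆ γ 0 := fun z hz => by simpa using hz 0 (le_refl 0)
    exact (hγcomp 0).of_isClosed_subset (hKclosed 0) hsub
  obtain ⟨z, hz⟩ := IsCompact.nonempty_iInter_of_sequence_nonempty_isCompact_isClosed
    K hKmono hKne hK0 hKclosed
  have hzall : ∀ m, f^[m] z ∈ γ m := by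
    intro m
    have := Set.mem_iInter.mp hz m
    exact this m le_rfl
  have hz0 : z ∈ γ 0 := by simpa using hzall 0
  have htend : Tendsto (fun n : ℕ => ‖f^[n] z‖) atTop atTop := by
    have h1 := aux_pow_tendsto ρ hρ
    exact tendsto_atTop_mono (fun n => le_of_lt (hγfar n (hzall n))) h1
  exact ⟨⟨z, hz0, hzall, htend⟩, ⟨z, htend⟩⟩
end
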